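/- arXiv:2011.01831 — 4 statements merged into one kernel-verified Lean document; each statement's English description precedes it below -/
import Mathlib

section
/- Let H be a separable real Hilbert space and Y_n = ∑_{j≥0} A_j(ε_{n−j}) a stationary linear process with i.i.d. centered innovations ε_n having covariance operator Γ_ε, where ∑_{j≥0} ‖A_j‖ < ∞. Then the long-run covariance operator Λ = ∑_{h∈ℤ} Γ_h equals A Γ_ε A*, where A = ∑_{j≥0} A_j. -/
/-!
Expanding `Y₀ = ∑ᵢ Aᵢ ε₋ᵢ` and `Y_h = ∑ⱼ Aⱼ ε_{h-j}` gives `Γ_h = ∑_{j-i=h} Aⱼ Γε Aᵢ*`: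
independent centered innovations at different times are uncorrelated, and identically
distributed ones share the covariance `Γε`. Expectation and double series may be interchanged
because `‖x‖‖y‖ ≤ (‖x‖² + ‖y‖²)/2` bounds the terms by `‖Aᵢ‖‖Aⱼ‖ E‖ε₀‖²`, which is summable.
Summing over all lags `h` then just regroups the absolutely convergent double series
`∑_{i,j} Aⱼ Γε Aᵢ* = A Γε A*`.
-/

open MeasureTheory ProbabilityTheory RealInnerProductSpace
open ContinuousLinearMap (adjoint)

section Summability

variable {Ω E : Type*} [MeasurableSpace Ω] {μ : Measure Ω} [NormedAddCommGroup E]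

theorem ae_summable_norm_of_summable_integral_norm {ι : Type*} [Countable ι] {F : ι → Ω → E}
    (hF : ∀ i, Integrable (F i) μ) (hsum : Summable fun i ↦ ∫ ω, ‖F i ω‖ ∂μ) :
    ∀ᵐ ω ∂μ, Summable fun i ↦ ‖F i ω‖ := by
  refine summable_norm_of_tsum_eLpNorm_ne_top le_rfl (fun i ↦ (hF i).aestronglyMeasurable) ?_
  simp_rw [eLpNorm_one_eq_lintegral_enorm, ← ofReal_integral_norm_eq_lintegral_enorm (hF _)]
  rw [← ENNReal.ofReal_tsum_of_nonneg (fun i ↦ integral_nonneg fun _ ↦ norm_nonneg _) hsum]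
  exact ENNReal.ofReal_ne_top

/-- Since `2 x ≤ 1 + x²`, a uniform second-moment bound suffices for pointwise summability. -/
theorem ae_summable_mul_norm_of_integral_sq_le {ι : Type*} [Countable ι] {a : ι → ℝ}
    (ha : Summable a) (ha₀ : ∀ i, 0 ≤ a i) {ξ : ι → Ω → E} (hξ : ∀ i, MemLp (ξ i) 2 μ) {C : ℝ}
    (hC : ∀ i, ∫ ω, ‖ξ i ω‖ ^ 2 ∂μ ≤ C) :
    ∀ᵐ ω ∂μ, Summable fun i ↦ a i * ‖ξ i ω‖ := by
  have hsq_int : ∀ i, Integrable (fun ω ↦ a i * ‖ξ i ω‖ ^ 2) μ := fun i ↦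
    ((hξ i).integrable_norm_pow two_ne_zero).const_mul (a i)
  have hsq_norm : ∀ i ω, ‖a i * ‖ξ i ω‖ ^ 2‖ = a i * ‖ξ i ω‖ ^ 2 := fun i ω ↦
    Real.norm_of_nonneg (by have := ha₀ i; positivity)
  have hsq : ∀ᵐ ω ∂μ, Summable fun i ↦ ‖a i * ‖ξ i ω‖ ^ 2‖ := by
    refine ae_summable_norm_of_summable_integral_norm hsq_int ?_
    refine (ha.mul_right C).of_nonneg_of_le (fun i ↦ integral_nonneg fun _ ↦ norm_nonneg _)
      fun i ↦ ?_
    simp_rw [hsq_norm, integral_const_mul]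
    exact mul_le_mul_of_nonneg_left (hC i) (ha₀ i)
  filter_upwards [hsq] with ω hω
  simp_rw [hsq_norm] at hω
  refine ((ha.add hω).div_const 2).of_nonneg_of_le (fun i ↦ mul_nonneg (ha₀ i) (norm_nonneg _))
    fun i ↦ ?_
  nlinarith [ha₀ i, mul_nonneg (ha₀ i) (sq_nonneg (‖ξ i ω‖ - 1))]

end Summability

section Covariance

variable {Ω E : Type*} [MeasurableSpace Ω] {μ : Measure Ω}
  [NormedAddCommGroup E] [InnerProductSpace ℝ E]

noncomputable def crossCov (μ : Measure Ω) (X Y : Ω → E) (z : E) : E :=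
  ∫ ω, ⟪X ω, z⟫ • Y ω ∂μ

theorem norm_inner_smul_le (x w y : E) : ‖⟪x, w⟫ • y‖ ≤ ‖x‖ * ‖w‖ * ‖y‖ := by
  rw [norm_smul]
  exact mul_le_mul_of_nonneg_right (abs_real_inner_le_norm x w) (norm_nonneg y)

theorem MeasureTheory.MemLp.integrable_inner_smul {X Y : Ω → E} (hX : MemLp X 2 μ)
    (hY : MemLp Y 2 μ) (w : E) :
    Integrable (fun ω ↦ ⟪X ω, w⟫ • Y ω) μ := by
  rw [← memLp_one_iff_integrable]
  exact hY.smul (hX.inner_const w) (r := 1)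

theorem ProbabilityTheory.IndepFun.crossCov_eq_zero [MeasurableSpace E] [BorelSpace E]
    {X Y : Ω → E} (hXY : IndepFun X Y μ) (hX : AEStronglyMeasurable X μ)
    (hY : AEStronglyMeasurable Y μ) (hY₀ : ∫ ω, Y ω ∂μ = 0) (z : E) : crossCov μ X Y z = 0 := by
  have hinner : Continuous fun x : E ↦ ⟪x, z⟫ := continuous_id.inner continuous_const
  have hsplit := (hXY.comp hinner.measurable measurable_id).integral_smul_eq_smul_integral
    (hinner.comp_aestronglyMeasurable hX) hY
  simpa [crossCov, hY₀] using hsplit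

theorem ProbabilityTheory.IdentDistrib.crossCov_self_eq [MeasurableSpace E] [BorelSpace E]
    {Ω' : Type*} [MeasurableSpace Ω'] {μ' : Measure Ω'} {X : Ω → E} {X' : Ω' → E}
    (h : IdentDistrib X X' μ μ') (z : E) : crossCov μ X X z = crossCov μ' X' X' z :=
  (h.comp ((continuous_id.inner continuous_const).smul continuous_id).measurable).integral_eq

theorem inner_tsum_smul_tsum {ι κ : Type*} [CompleteSpace E] {u : ι → E} {v : κ → E}
    (hu : Summable fun i ↦ ‖u i‖) (hv : Summable fun j ↦ ‖v j‖) (z : E) :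
    ⟪(∑' i, u i), z⟫ • ∑' j, v j = ∑' p : ι × κ, ⟪u p.1, z⟫ • v p.2 := by
  have hnorm : Summable fun p : ι × κ ↦ ‖u p.1‖ * ‖v p.2‖ :=
    Summable.mul_of_nonneg hu hv (fun _ ↦ norm_nonneg _) (fun _ ↦ norm_nonneg _)
  have hprod : Summable fun p : ι × κ ↦ ⟪u p.1, z⟫ • v p.2 := by
    refine (hnorm.mul_right ‖z‖).of_norm_bounded fun p ↦ ?_
    calc ‖⟪u p.1, z⟫ • v p.2‖ ≤ ‖u p.1‖ * ‖z‖ * ‖v p.2‖ := norm_inner_smul_le _ _ _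
      _ = ‖u p.1‖ * ‖v p.2‖ * ‖z‖ := by ring
  have hinner : HasSum (fun i ↦ ⟪u i, z⟫) ⟪(∑' i, u i), z⟫ :=
    hu.of_norm.hasSum.mapL ((innerSL ℝ).flip z)
  exact hinner.smul_eq hv.of_norm.hasSum hprod.hasSum

variable [CompleteSpace E]

theorem crossCov_tsum_tsum {ι κ : Type*} [Countable ι] [Countable κ]
    {A : ι → E →L[ℝ] E} {B : κ → E →L[ℝ] E}
    (hA : Summable fun i ↦ ‖A i‖) (hB : Summable fun j ↦ ‖B j‖)
    {ξ : ι → Ω → E} {ζ : κ → Ω → E} (hξ : ∀ i, MemLp (ξ i) 2 μ) (hζ : ∀ j, MemLp (ζ j) 2 μ)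
    {C : ℝ} (hξC : ∀ i, ∫ ω, ‖ξ i ω‖ ^ 2 ∂μ ≤ C) (hζC : ∀ j, ∫ ω, ‖ζ j ω‖ ^ 2 ∂μ ≤ C) (z : E) :
    crossCov μ (fun ω ↦ ∑' i, A i (ξ i ω)) (fun ω ↦ ∑' j, B j (ζ j ω)) z =
      ∑' p : ι × κ, B p.2 (crossCov μ (ξ p.1) (ζ p.2) (adjoint (A p.1) z)) := by
  set F : ι × κ → Ω → E := fun p ω ↦ B p.2 (⟪ξ p.1 ω, adjoint (A p.1) z⟫ • ζ p.2 ω) with hF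
  have hF_int : ∀ p, Integrable (F p) μ := fun p ↦
    (B p.2).integrable_comp ((hξ p.1).integrable_inner_smul (hζ p.2) _)
  have hF_le : ∀ p ω, ‖F p ω‖ ≤
      ‖A p.1‖ * ‖B p.2‖ * ‖z‖ * ((‖ξ p.1 ω‖ ^ 2 + ‖ζ p.2 ω‖ ^ 2) / 2) := by
    intro p ω
    have hadj : ‖adjoint (A p.1) z‖ ≤ ‖A p.1‖ * ‖z‖ := by
      simpa only [LinearIsometryEquiv.norm_map] using (adjoint (A p.1)).le_opNorm z
    calc ‖F p ω‖ ≤ ‖B p.2‖ * (‖ξ p.1 ω‖ * ‖adjoint (A p.1) z‖ * ‖ζ p.2 ω‖) :=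
          (B p.2).le_opNorm_of_le (norm_inner_smul_le _ _ _)
      _ ≤ ‖B p.2‖ * (‖ξ p.1 ω‖ * (‖A p.1‖ * ‖z‖) * ‖ζ p.2 ω‖) := by gcongr
      _ ≤ _ := by
        have hk : 0 ≤ ‖A p.1‖ * ‖B p.2‖ * ‖z‖ := by positivity
        nlinarith [mul_nonneg hk (sq_nonneg (‖ξ p.1 ω‖ - ‖ζ p.2 ω‖))]
  have hF_sum : Summable fun p ↦ ∫ ω, ‖F p ω‖ ∂μ := by
    have hAB := Summable.mul_of_nonneg hA hB (fun _ ↦ norm_nonneg _) (fun _ ↦ norm_nonneg _)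
    refine (hAB.mul_right (‖z‖ * C)).of_nonneg_of_le
      (fun p ↦ integral_nonneg fun _ ↦ norm_nonneg _) fun p ↦ ?_
    have hsq : Integrable (fun ω ↦ (‖ξ p.1 ω‖ ^ 2 + ‖ζ p.2 ω‖ ^ 2) / 2) μ :=
      (((hξ p.1).integrable_norm_pow two_ne_zero).add
        ((hζ p.2).integrable_norm_pow two_ne_zero)).div_const 2
    calc ∫ ω, ‖F p ω‖ ∂μ
        ≤ ∫ ω, ‖A p.1‖ * ‖B p.2‖ * ‖z‖ * ((‖ξ p.1 ω‖ ^ 2 + ‖ζ p.2 ω‖ ^ 2) / 2) ∂μ :=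
          integral_mono_of_nonneg (.of_forall fun _ ↦ norm_nonneg _) (hsq.const_mul _)
            (.of_forall (hF_le p))
      _ = ‖A p.1‖ * ‖B p.2‖ * ‖z‖ *
            ((∫ ω, ‖ξ p.1 ω‖ ^ 2 ∂μ + ∫ ω, ‖ζ p.2 ω‖ ^ 2 ∂μ) / 2) := by
          rw [integral_const_mul, integral_div, integral_add
            ((hξ p.1).integrable_norm_pow two_ne_zero) ((hζ p.2).integrable_norm_pow two_ne_zero)]
      _ ≤ ‖A p.1‖ * ‖B p.2‖ * ‖z‖ * C := by
          gcongr
          linarith [hξC p.1, hζC p.2]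
      _ = ‖A p.1‖ * ‖B p.2‖ * (‖z‖ * C) := by ring
  have h_ae : ∀ᵐ ω ∂μ, ⟪∑' i, A i (ξ i ω), z⟫ • ∑' j, B j (ζ j ω) = ∑' p, F p ω := by
    filter_upwards [ae_summable_mul_norm_of_integral_sq_le hA (fun _ ↦ norm_nonneg _) hξ hξC,
      ae_summable_mul_norm_of_integral_sq_le hB (fun _ ↦ norm_nonneg _) hζ hζC] with ω hξω hζω
    rw [inner_tsum_smul_tsum (hξω.of_nonneg_of_le (fun _ ↦ norm_nonneg _)
      fun i ↦ (A i).le_opNorm _) (hζω.of_nonneg_of_le (fun _ ↦ norm_nonneg _)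
      fun j ↦ (B j).le_opNorm _)]
    refine tsum_congr fun p ↦ ?_
    simp only [hF, map_smul, ContinuousLinearMap.adjoint_inner_right]
  calc crossCov μ (fun ω ↦ ∑' i, A i (ξ i ω)) (fun ω ↦ ∑' j, B j (ζ j ω)) z
      = ∫ ω, ∑' p, F p ω ∂μ := integral_congr_ae h_ae
    _ = ∑' p, ∫ ω, F p ω ∂μ := (integral_tsum_of_summable_integral_norm hF_int hF_sum).symm
    _ = ∑' p : ι × κ, B p.2 (crossCov μ (ξ p.1) (ζ p.2) (adjoint (A p.1) z)) :=
      tsum_congr fun p ↦ (B p.2).integral_comp_comm ((hξ p.1).integrable_inner_smul (hζ p.2) _)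

theorem hasSum_comp_comp_adjoint {ι κ : Type*} {A : ι → E →L[ℝ] E} {B : κ → E →L[ℝ] E}
    (hA : Summable fun i ↦ ‖A i‖) (hB : Summable fun j ↦ ‖B j‖) (T : E →L[ℝ] E) :
    HasSum (fun p : ι × κ ↦ B p.2 ∘L T ∘L adjoint (A p.1))
      ((∑' j, B j) ∘L T ∘L adjoint (∑' i, A i)) := by
  have hTA : HasSum (fun i ↦ T ∘L adjoint (A i)) (T ∘L adjoint (∑' i, A i)) :=
    (hA.of_norm.hasSum.mapL adjoint.toContinuousLinearEquiv.toContinuousLinearMap).mapL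
      (ContinuousLinearMap.compL ℝ E E E T)
  have hTA_norm : Summable fun i ↦ ‖T ∘L adjoint (A i)‖ := by
    refine (hA.mul_left ‖T‖).of_nonneg_of_le (fun _ ↦ norm_nonneg _) fun i ↦ ?_
    calc ‖T ∘L adjoint (A i)‖ ≤ ‖T‖ * ‖adjoint (A i)‖ := T.opNorm_comp_le _
      _ = ‖T‖ * ‖A i‖ := by rw [LinearIsometryEquiv.norm_map]
  have hprod := hB.of_norm.hasSum.mul hTA
    (summable_mul_of_summable_norm (f := B) (g := fun i ↦ T ∘L adjoint (A i)) hB hTA_norm)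
  exact (Equiv.prodComm ι κ).hasSum_iff.mpr hprod

end Covariance

section LinearProcess

variable {Ω E : Type*} [MeasurableSpace Ω] {μ : Measure Ω}
  [NormedAddCommGroup E] [InnerProductSpace ℝ E] [MeasurableSpace E] [BorelSpace E]
  {ε : ℤ → Ω → E}

theorem crossCov_iid (hindep : iIndepFun ε μ) (hident : ∀ n, IdentDistrib (ε n) (ε 0) μ μ)
    (hcentered : ∀ n, ∫ ω, ε n ω ∂μ = 0) (hL2 : ∀ n, MemLp (ε n) 2 μ) (m n : ℤ) (z : E) :
    crossCov μ (ε m) (ε n) z = if m = n then crossCov μ (ε 0) (ε 0) z else 0 := by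
  split_ifs with hmn
  · subst hmn
    exact (hident m).crossCov_self_eq z
  · exact (hindep.indepFun hmn).crossCov_eq_zero (hL2 m).1 (hL2 n).1 (hcentered n) z

theorem crossCov_linearProcess [CompleteSpace E] (hindep : iIndepFun ε μ)
    (hident : ∀ n, IdentDistrib (ε n) (ε 0) μ μ) (hcentered : ∀ n, ∫ ω, ε n ω ∂μ = 0)
    (hL2 : ∀ n, MemLp (ε n) 2 μ) {A : ℕ → E →L[ℝ] E} (hA : Summable fun j ↦ ‖A j‖)
    {Γε : E →L[ℝ] E} (hΓε : ∀ z, Γε z = crossCov μ (ε 0) (ε 0) z) (m n : ℤ) (z : E) :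
    crossCov μ (fun ω ↦ ∑' j : ℕ, A j (ε (m - j) ω)) (fun ω ↦ ∑' j : ℕ, A j (ε (n - j) ω)) z =
      (∑' p : (fun p : ℕ × ℕ ↦ (p.2 : ℤ) - p.1) ⁻¹' {n - m},
        A (p : ℕ × ℕ).2 ∘L Γε ∘L adjoint (A (p : ℕ × ℕ).1)) z := by
  have hmoment : ∀ k, ∫ ω, ‖ε k ω‖ ^ 2 ∂μ ≤ ∫ ω, ‖ε 0 ω‖ ^ 2 ∂μ := fun k ↦
    ((hident k).comp (measurable_norm.pow_const 2)).integral_eq.le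
  set s := (fun p : ℕ × ℕ ↦ (p.2 : ℤ) - p.1) ⁻¹' {n - m}
  have hsum := (hasSum_comp_comp_adjoint hA hA Γε).summable.subtype s
  calc crossCov μ (fun ω ↦ ∑' j : ℕ, A j (ε (m - j) ω)) (fun ω ↦ ∑' j : ℕ, A j (ε (n - j) ω)) z
      = ∑' p : ℕ × ℕ, s.indicator (fun p ↦ (A p.2 ∘L Γε ∘L adjoint (A p.1)) z) p := by
        rw [crossCov_tsum_tsum hA hA (fun _ ↦ hL2 _) (fun _ ↦ hL2 _) (fun _ ↦ hmoment _)
          (fun _ ↦ hmoment _) z]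
        refine tsum_congr fun p ↦ ?_
        have hlag : m - p.1 = n - p.2 ↔ (p.2 : ℤ) - p.1 = n - m := by omega
        rw [crossCov_iid hindep hident hcentered hL2, ← hΓε]
        by_cases hp : (p.2 : ℤ) - p.1 = n - m <;> simp [s, hlag, hp]
    _ = ∑' p : s, (A (p : ℕ × ℕ).2 ∘L Γε ∘L adjoint (A (p : ℕ × ℕ).1)) z :=
        (tsum_subtype s _).symm
    _ = _ := ((ContinuousLinearMap.apply ℝ E z).map_tsum hsum).symm

end LinearProcess

theorem statement_1_general
    {H : Type*} [NormedAddCommGroup H] [InnerProductSpace ℝ H] [CompleteSpace H]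
    [MeasurableSpace H] [BorelSpace H]
    {Ω : Type*} [MeasurableSpace Ω] {μ : Measure Ω}
    (ε : ℤ → Ω → H)
    (hindep : iIndepFun ε μ)
    (hident : ∀ n m, IdentDistrib (ε n) (ε m) μ μ)
    (hcentered : ∀ n, ∫ ω, ε n ω ∂μ = 0)
    (hL2 : ∀ n, MemLp (ε n) 2 μ)
    (Γε : H →L[ℝ] H)
    (hΓε : ∀ z, Γε z = ∫ ω, ⟪ε 0 ω, z⟫ • ε 0 ω ∂μ)
    (A : ℕ → H →L[ℝ] H)
    (hA : Summable fun j => ‖A j‖)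
    (Y : ℤ → Ω → H)
    (hY : ∀ n ω, Y n ω = ∑' j : ℕ, A j (ε (n - j) ω))
    (Γ : ℤ → H →L[ℝ] H)
    (hΓ : ∀ h z, Γ h z = ∫ ω, ⟪Y 0 ω, z⟫ • Y h ω ∂μ) :
    (∑' h : ℤ, Γ h) =
      (∑' j : ℕ, A j) ∘L Γε ∘L (ContinuousLinearMap.adjoint (∑' j : ℕ, A j)) := by
  obtain rfl : Y = fun n ω ↦ ∑' j : ℕ, A j (ε (n - j) ω) := funext fun n ↦ funext (hY n)
  have hΓ_fiber : Γ = fun h ↦ ∑' p : (fun p : ℕ × ℕ ↦ (p.2 : ℤ) - p.1) ⁻¹' {h},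
      A (p : ℕ × ℕ).2 ∘L Γε ∘L adjoint (A (p : ℕ × ℕ).1) := by
    ext h z
    have hlag := crossCov_linearProcess hindep (fun n ↦ hident n 0) hcentered hL2 hA hΓε 0 h z
    rw [sub_zero] at hlag
    exact (hΓ h z).trans hlag
  rw [hΓ_fiber]
  exact ((hasSum_comp_comp_adjoint hA hA Γε).tsum_fiberwise _).tsum_eq

/-- For the stationary linear process `Y_n = ∑_{j≥0} A_j(ε_{n-j})` with
i.i.d. centered innovations having covariance operator `Γε` and `∑_j ‖A_j‖ < ∞`, the
long-run covariance operator `Λ = ∑_{h∈ℤ} Γ_h` equals `A Γε A*`, `A = ∑_{j≥0} A_j`. -/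
theorem statement_1
    {H : Type*} [NormedAddCommGroup H] [InnerProductSpace ℝ H] [CompleteSpace H]
    [TopologicalSpace.SeparableSpace H] [MeasurableSpace H] [BorelSpace H]
    {Ω : Type*} [MeasurableSpace Ω] {μ : Measure Ω} [IsProbabilityMeasure μ]
    (ε : ℤ → Ω → H)
    (hmeas : ∀ n, Measurable (ε n))
    (hindep : iIndepFun ε μ)
    (hident : ∀ n m, IdentDistrib (ε n) (ε m) μ μ)
    (hcentered : ∀ n, ∫ ω, ε n ω ∂μ = 0)
    (hL2 : ∀ n, MemLp (ε n) 2 μ)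
    (Γε : H →L[ℝ] H)
    (hΓε : ∀ z, Γε z = ∫ ω, ⟪ε 0 ω, z⟫ • ε 0 ω ∂μ)
    (A : ℕ → H →L[ℝ] H)
    (hA : Summable fun j => ‖A j‖)
    (Y : ℤ → Ω → H)
    (hY : ∀ n ω, Y n ω = ∑' j : ℕ, A j (ε (n - j) ω))
    (Γ : ℤ → H →L[ℝ] H)
    (hΓ : ∀ h z, Γ h z = ∫ ω, ⟪Y 0 ω, z⟫ • Y h ω ∂μ) :
    (∑' h : ℤ, Γ h) =
      (∑' j : ℕ, A j) ∘L Γε ∘L (ContinuousLinearMap.adjoint (∑' j : ℕ, A j)) :=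
  statement_1_general ε hindep hident hcentered hL2 Γε hΓε A hA Y hY Γ hΓ
end

section
/- Under the stationary functional dynamic factor model with orthonormal loadings λ_1,…,λ_K and factors satisfying: for each k there exists h_k ≠ 0 with Cov(f_{0,k}, f_{h_k,k}) ≠ 0, and assuming the operator Λ = ∑_{h≠0} Γ_h is well-defined (norm-convergent), the closed range of Λ equals span{λ_1,…,λ_K}, and the kernel of Λ equals the orthogonal complement of span{λ_1,…,λ_K}, provided ∑_{h≠0} Cov(f_{0,k}, f_{h,k}) ≠ 0 for each k. -/
/-!
For `h ≠ 0` the noise terms and the cross-factor terms of `Γ_h` integrate to zero, so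
`Γ_h = ∑_k Cov(f_{0,k}, f_{h,k}) λ_k ⊗ λ_k`. Summing over `h ≠ 0` gives `Λ = ∑_k c_k λ_k ⊗ λ_k`,
an operator that is diagonal in the orthonormal family `λ` with nonzero eigenvalues `c_k`: its range
is the finite-dimensional, hence closed, span of the `λ_k`, and it kills exactly the vectors
orthogonal to every `λ_k`.
-/

open MeasureTheory RealInnerProductSpace

section OrthonormalDiagonal

variable {ι E : Type*} [NormedAddCommGroup E] [InnerProductSpace ℝ E] {lam : ι → E}

theorem mem_orthogonal_span_range_iff {z : E} :
    z ∈ (Submodule.span ℝ (Set.range lam))ᗮ ↔ ∀ k, ⟪lam k, z⟫ = 0 := by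
  rw [Submodule.mem_orthogonal]
  refine ⟨fun hz k => hz _ (Submodule.subset_span ⟨k, rfl⟩), fun hz u hu => ?_⟩
  induction hu using Submodule.span_induction with
  | mem x hx => obtain ⟨k, rfl⟩ := hx; exact hz k
  | zero => simp
  | add x y _ _ hx hy => simp [inner_add_left, hx, hy]
  | smul r x _ hx => simp [inner_smul_left, hx]

variable [Fintype ι] {c : ι → ℝ} {T : E →ₗ[ℝ] E}

theorem inner_apply_of_orthonormal (hlam : Orthonormal ℝ lam)
    (hT : ∀ z, T z = ∑ k, (c k * ⟪lam k, z⟫) • lam k) (k : ι) (z : E) :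
    ⟪lam k, T z⟫ = c k * ⟪lam k, z⟫ := by
  rw [hT, hlam.inner_right_fintype]

theorem apply_eq_smul_of_orthonormal (hlam : Orthonormal ℝ lam)
    (hT : ∀ z, T z = ∑ k, (c k * ⟪lam k, z⟫) • lam k) (k : ι) :
    T (lam k) = c k • lam k := by
  classical
  simp [hT, orthonormal_iff_ite.mp hlam]

theorem range_eq_span_of_orthonormal (hlam : Orthonormal ℝ lam) (hc : ∀ k, c k ≠ 0)
    (hT : ∀ z, T z = ∑ k, (c k * ⟪lam k, z⟫) • lam k) :
    LinearMap.range T = Submodule.span ℝ (Set.range lam) := by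
  apply le_antisymm
  · rintro _ ⟨z, rfl⟩
    rw [hT]
    exact Submodule.sum_mem _ fun k _ => Submodule.smul_mem _ _ (Submodule.subset_span ⟨k, rfl⟩)
  · rw [Submodule.span_le]
    rintro _ ⟨k, rfl⟩
    refine ⟨(c k)⁻¹ • lam k, ?_⟩
    rw [map_smul, apply_eq_smul_of_orthonormal hlam hT, smul_smul, inv_mul_cancel₀ (hc k),
      one_smul]

theorem ker_eq_orthogonal_span_of_orthonormal (hlam : Orthonormal ℝ lam) (hc : ∀ k, c k ≠ 0)
    (hT : ∀ z, T z = ∑ k, (c k * ⟪lam k, z⟫) • lam k) :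
    LinearMap.ker T = (Submodule.span ℝ (Set.range lam))ᗮ := by
  ext z
  rw [LinearMap.mem_ker, mem_orthogonal_span_range_iff]
  refine ⟨fun hz k => ?_, fun hz => by simp [hT, hz]⟩
  have := inner_apply_of_orthonormal hlam hT k z
  rw [hz, inner_zero_right, zero_eq_mul] at this
  exact this.resolve_left (hc k)

end OrthonormalDiagonal

section Uncorrelated

variable {Ω ι : Type*} [MeasurableSpace Ω] {μ : Measure Ω} [Fintype ι]

theorem integral_sum_add_mul_sum_add {A B : ι → Ω → ℝ} {U V : Ω → ℝ}
    (hA : ∀ k, MemLp (A k) 2 μ) (hB : ∀ k, MemLp (B k) 2 μ) (hU : MemLp U 2 μ)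
    (hV : MemLp V 2 μ) (hAB : ∀ k j, k ≠ j → ∫ ω, A k ω * B j ω ∂μ = 0)
    (hAV : ∀ k, ∫ ω, A k ω * V ω ∂μ = 0) (hBU : ∀ j, ∫ ω, B j ω * U ω ∂μ = 0)
    (hUV : ∫ ω, U ω * V ω ∂μ = 0) (a b : ι → ℝ) :
    ∫ ω, (∑ k, a k * A k ω + U ω) * (∑ j, b j * B j ω + V ω) ∂μ
      = ∑ k, a k * b k * ∫ ω, A k ω * B k ω ∂μ := by
  have hmul : ∀ {g g' : Ω → ℝ}, MemLp g 2 μ → MemLp g' 2 μ →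
      Integrable (fun ω => g ω * g' ω) μ := fun hg hg' => hg.integrable_mul hg'
  have hexpand : ∀ ω, (∑ k, a k * A k ω + U ω) * (∑ j, b j * B j ω + V ω)
      = ∑ k, ∑ j, a k * b j * (A k ω * B j ω) + ∑ k, a k * (A k ω * V ω)
        + ∑ j, b j * (B j ω * U ω) + U ω * V ω := by
    intro ω
    rw [add_mul, mul_add, mul_add, Finset.sum_mul_sum, Finset.sum_mul, Finset.mul_sum, ← add_assoc]
    simp only [mul_comm, mul_left_comm]
  have hAB_int : ∀ k j, Integrable (fun ω => a k * b j * (A k ω * B j ω)) μ :=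
    fun k j => (hmul (hA k) (hB j)).const_mul _
  have hAV_int : Integrable (fun ω => ∑ k, a k * (A k ω * V ω)) μ :=
    integrable_finsetSum _ fun k _ => (hmul (hA k) hV).const_mul _
  have hBU_int : Integrable (fun ω => ∑ j, b j * (B j ω * U ω)) μ :=
    integrable_finsetSum _ fun j _ => (hmul (hB j) hU).const_mul _
  have hAB_sum_int : Integrable (fun ω => ∑ k, ∑ j, a k * b j * (A k ω * B j ω)) μ :=
    integrable_finsetSum _ fun k _ => integrable_finsetSum _ fun j _ => hAB_int k j
  have hdiag : ∀ k, ∑ j, a k * b j * ∫ ω, A k ω * B j ω ∂μ = a k * b k * ∫ ω, A k ω * B k ω ∂μ :=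
    fun k => Finset.sum_eq_single_of_mem k (Finset.mem_univ k) fun j _ hjk => by
      rw [hAB k j hjk.symm, mul_zero]
  rw [integral_congr_ae (ae_of_all _ hexpand),
    integral_add (by fun_prop) (hmul hU hV), integral_add (by fun_prop) hBU_int,
    integral_add hAB_sum_int hAV_int,
    integral_finsetSum _ fun k _ => integrable_finsetSum _ fun j _ => hAB_int k j,
    integral_finsetSum _ fun k _ => (hmul (hA k) hV).const_mul _,
    integral_finsetSum _ fun j _ => (hmul (hB j) hU).const_mul _]
  simp only [integral_finsetSum _ fun j _ => hAB_int _ j, integral_const_mul, hdiag, hAV, hBU, hUV,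
    mul_zero, Finset.sum_const_zero, add_zero]

end Uncorrelated

section FactorModel

variable {H Ω ι : Type*} [NormedAddCommGroup H] [InnerProductSpace ℝ H] [Fintype ι]
  {lam : ι → H} {f : ℤ → ι → Ω → ℝ} {ε X : ℤ → Ω → H}

theorem inner_factorModel (hX : ∀ n ω, X n ω = (∑ k, f n k ω • lam k) + ε n ω) (n : ℤ) (ω : Ω)
    (z : H) : ⟪X n ω, z⟫ = ∑ k, ⟪lam k, z⟫ * f n k ω + ⟪ε n ω, z⟫ := by
  simp only [hX, inner_add_left, sum_inner, real_inner_smul_left, mul_comm]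

variable [MeasurableSpace Ω] {μ : Measure Ω}

theorem memLp_factorModel (hX : ∀ n ω, X n ω = (∑ k, f n k ω • lam k) + ε n ω)
    (hf2 : ∀ n k, MemLp (f n k) 2 μ) (hε2 : ∀ n, MemLp (ε n) 2 μ) (n : ℤ) :
    MemLp (X n) 2 μ := by
  have hsum : MemLp (fun ω => ∑ k, f n k ω • lam k) 2 μ :=
    memLp_finsetSum _ fun k _ => (memLp_top_const (lam k)).smul (hf2 n k)
  rw [show X n = fun ω => (∑ k, f n k ω • lam k) + ε n ω from funext (hX n)]
  exact hsum.add (hε2 n)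

theorem integral_inner_smul_factorModel [CompleteSpace H]
    (hX : ∀ n ω, X n ω = (∑ k, f n k ω • lam k) + ε n ω)
    (hf2 : ∀ n k, MemLp (f n k) 2 μ) (hε2 : ∀ n, MemLp (ε n) 2 μ)
    (hfuncorr : ∀ n m k j, k ≠ j → ∫ ω, f n k ω * f m j ω ∂μ = 0)
    (hεwn : ∀ n m, n ≠ m → ∀ y z : H, ∫ ω, ⟪ε n ω, y⟫ * ⟪ε m ω, z⟫ ∂μ = 0)
    (hfε : ∀ n m k (z : H), ∫ ω, f n k ω * ⟪ε m ω, z⟫ ∂μ = 0)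
    {n m : ℤ} (hnm : n ≠ m) (z : H) :
    ∫ ω, ⟪X n ω, z⟫ • X m ω ∂μ = ∑ k, ((∫ ω, f n k ω * f m k ω ∂μ) * ⟪lam k, z⟫) • lam k := by
  have hX2 : ∀ n, MemLp (X n) 2 μ := memLp_factorModel hX hf2 hε2
  have hint : Integrable (fun ω => ⟪X n ω, z⟫ • X m ω) μ :=
    memLp_one_iff_integrable.mp ((hX2 m).smul ((hX2 n).inner_const z))
  refine ext_inner_right ℝ fun w => ?_
  rw [real_inner_comm, ← integral_inner hint]
  simp only [real_inner_comm _ w, real_inner_smul_left, sum_inner, inner_factorModel hX]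
  rw [integral_sum_add_mul_sum_add (hf2 n) (hf2 m) ((hε2 n).inner_const z) ((hε2 m).inner_const w)
    (hfuncorr n m) (fun k => hfε n m k w) (fun j => hfε m n j z) (hεwn n m hnm z w)]
  exact Finset.sum_congr rfl fun k _ => by ring

end FactorModel

theorem statement_4_general
    {H : Type*} [NormedAddCommGroup H] [InnerProductSpace ℝ H] [CompleteSpace H]
    {Ω : Type*} [MeasurableSpace Ω] {μ : Measure Ω}
    {K : ℕ}
    (lam : Fin K → H) (hlam : Orthonormal ℝ lam)
    (f : ℤ → Fin K → Ω → ℝ)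
    (hf2 : ∀ n k, MemLp (f n k) 2 μ)
    (hfuncorr : ∀ n m k j, k ≠ j → ∫ ω, f n k ω * f m j ω ∂μ = 0)
    (ε : ℤ → Ω → H)
    (hε2 : ∀ n, MemLp (ε n) 2 μ)
    (hεwn : ∀ n m, n ≠ m → ∀ y z : H, ∫ ω, ⟪ε n ω, y⟫ * ⟪ε m ω, z⟫ ∂μ = 0)
    (hfε : ∀ n m k (z : H), ∫ ω, f n k ω * ⟪ε m ω, z⟫ ∂μ = 0)
    (X : ℤ → Ω → H)
    (hX : ∀ n ω, X n ω = (∑ k, f n k ω • lam k) + ε n ω)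
    (Γ : ℤ → H →L[ℝ] H)
    (hΓ : ∀ h z, Γ h z = ∫ ω, ⟪X 0 ω, z⟫ • X h ω ∂μ)
    (Λ : H →L[ℝ] H)
    (hΛ : HasSum (fun h : {h : ℤ // h ≠ 0} => Γ h) Λ)
    (c : Fin K → ℝ)
    (hc : ∀ k, HasSum (fun h : {h : ℤ // h ≠ 0} => ∫ ω, f 0 k ω * f (h : ℤ) k ω ∂μ) (c k))
    (hcne : ∀ k, c k ≠ 0) :
    (LinearMap.range (Λ : H →ₗ[ℝ] H)).topologicalClosure = Submodule.span ℝ (Set.range lam) ∧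
      LinearMap.ker (Λ : H →ₗ[ℝ] H) = (Submodule.span ℝ (Set.range lam))ᗮ := by
  have hΓ_eq (h : {h : ℤ // h ≠ 0}) (z : H) :
      Γ h z = ∑ k, ((∫ ω, f 0 k ω * f h k ω ∂μ) * ⟪lam k, z⟫) • lam k :=
    (hΓ h z).trans <|
      integral_inner_smul_factorModel hX hf2 hε2 hfuncorr hεwn hfε h.2.symm z
  have hΛ_eq (z : H) : (Λ : H →ₗ[ℝ] H) z = ∑ k, (c k * ⟪lam k, z⟫) • lam k := by
    refine (hΛ.mapL (ContinuousLinearMap.apply ℝ H z)).unique ?_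
    simp only [ContinuousLinearMap.apply_apply, hΓ_eq]
    exact hasSum_sum fun k _ => ((hc k).mul_right _).smul_const _
  have hspan_closed : IsClosed (Submodule.span ℝ (Set.range lam) : Set H) :=
    haveI := FiniteDimensional.span_of_finite ℝ (Set.finite_range lam)
    Submodule.closed_of_finiteDimensional _
  refine ⟨?_, ker_eq_orthogonal_span_of_orthonormal hlam hcne hΛ_eq⟩
  rw [range_eq_span_of_orthonormal hlam hcne hΛ_eq, hspan_closed.submodule_topologicalClosure_eq]

/-- Under the stationary functional dynamic factor model with orthonormal
loadings `λ_1,…,λ_K`, factors such that for each `k` there is `h_k ≠ 0` with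
`Cov(f_{0,k}, f_{h_k,k}) ≠ 0`, and assuming `Λ = ∑_{h≠0} Γ_h` is well defined
(norm-convergent) with `∑_{h≠0} Cov(f_{0,k}, f_{h,k}) ≠ 0` for each `k`, the closed
range of `Λ` equals `span{λ_1,…,λ_K}` and the kernel of `Λ` equals its orthogonal
complement. -/
theorem statement_4
    {H : Type*} [NormedAddCommGroup H] [InnerProductSpace ℝ H] [CompleteSpace H]
    [TopologicalSpace.SeparableSpace H]
    {Ω : Type*} [MeasurableSpace Ω] {μ : Measure Ω} [IsProbabilityMeasure μ]
    {K : ℕ}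
    (lam : Fin K → H) (hlam : Orthonormal ℝ lam)
    (f : ℤ → Fin K → Ω → ℝ)
    (hf2 : ∀ n k, MemLp (f n k) 2 μ)
    (hfcentered : ∀ n k, ∫ ω, f n k ω ∂μ = 0)
    (hfstat : ∀ n h k j, ∫ ω, f n k ω * f (n + h) j ω ∂μ = ∫ ω, f 0 k ω * f h j ω ∂μ)
    (hfuncorr : ∀ n m k j, k ≠ j → ∫ ω, f n k ω * f m j ω ∂μ = 0)
    (ε : ℤ → Ω → H)
    (hε2 : ∀ n, MemLp (ε n) 2 μ)
    (hεcentered : ∀ n, ∫ ω, ε n ω ∂μ = 0)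
    (hεwn : ∀ n m, n ≠ m → ∀ y z : H, ∫ ω, ⟪ε n ω, y⟫ * ⟪ε m ω, z⟫ ∂μ = 0)
    (hfε : ∀ n m k (z : H), ∫ ω, f n k ω * ⟪ε m ω, z⟫ ∂μ = 0)
    (X : ℤ → Ω → H)
    (hX : ∀ n ω, X n ω = (∑ k, f n k ω • lam k) + ε n ω)
    (Γ : ℤ → H →L[ℝ] H)
    (hΓ : ∀ h z, Γ h z = ∫ ω, ⟪X 0 ω, z⟫ • X h ω ∂μ)
    (hdep : ∀ k, ∃ h : ℤ, h ≠ 0 ∧ ∫ ω, f 0 k ω * f h k ω ∂μ ≠ 0)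
    (Λ : H →L[ℝ] H)
    (hΛ : HasSum (fun h : {h : ℤ // h ≠ 0} => Γ h) Λ)
    (c : Fin K → ℝ)
    (hc : ∀ k, HasSum (fun h : {h : ℤ // h ≠ 0} => ∫ ω, f 0 k ω * f (h : ℤ) k ω ∂μ) (c k))
    (hcne : ∀ k, c k ≠ 0) :
    (LinearMap.range (Λ : H →ₗ[ℝ] H)).topologicalClosure = Submodule.span ℝ (Set.range lam) ∧
      LinearMap.ker (Λ : H →ₗ[ℝ] H) = (Submodule.span ℝ (Set.range lam))ᗮ :=
  statement_4_general lam hlam f hf2 hfuncorr ε hε2 hεwn hfε X hX Γ hΓ Λ hΛ c hc hcne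
end

section
/- Let (X_n) be a stationary H-valued process with E‖X_0‖⁴ < ∞ and E(X_0)=0, and let Γ_h(z)=E(⟨X_0,z⟩X_h) with kernel γ_h(t,s)=E(X_0(t)X_h(s)) for H=L²[0,1]. Let γ̂_h(t,s)=N^{−1}∑_{i=1}^{N−h} X_i(t)X_{i+h}(s) for 0≤h<N. Then for each fixed h, E‖γ̂_h − γ_h‖²_{L²([0,1]²)} → 0 as N → ∞, provided the process satisfies a summability condition on fourth-order cumulants (e.g., the X_n are m-dependent or L⁴-approximable). -/
/-!
Write `Z k = T (X k) (X (k + h))`. By stationarity every `Z k` has mean `G` and the same second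
moment, and by `m`-dependence `Z k - G` and `Z l - G` are independent and centred, hence
orthogonal in `L²(Ω; E)`, as soon as `l > k + h + m`. In a Hilbert space, a sum of `n` vectors of
norm at most `c` that are pairwise orthogonal beyond distance `d` has squared norm at most
`(2d + 1) c² n`, so the average `N⁻¹ ∑ (Z i - G)` tends to `0` in `L²`. The estimator divides by
`N` but sums only `N - h` terms; the resulting bias `(h / N) G` vanishes as well.
-/

open MeasureTheory ProbabilityTheory RealInnerProductSpace Filter Finset

section FiniteRangeCorrelation

variable {F : Type*} [NormedAddCommGroup F] [InnerProductSpace ℝ F]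
  {v : ℕ → F} {c : ℝ} {d : ℕ}

theorem norm_sum_sq_le_of_inner_eq_zero (hv : ∀ i, ‖v i‖ ≤ c)
    (horth : ∀ i j, i + d < j → ⟪v i, v j⟫ = 0) (s : Finset ℕ) :
    ‖∑ i ∈ s, v i‖ ^ 2 ≤ (2 * d + 1) * c ^ 2 * #s := by
  have hrow : ∀ i, ∑ j ∈ s, ⟪v i, v j⟫ ≤ (2 * d + 1) * c ^ 2 := by
    intro i
    have hnear : ∑ j ∈ s ∩ Icc (i - d) (i + d), ⟪v i, v j⟫ = ∑ j ∈ s, ⟪v i, v j⟫ := by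
      refine sum_subset inter_subset_left fun j hjs hj => ?_
      have hfar : ¬(i - d ≤ j ∧ j ≤ i + d) := fun hmem =>
        hj (mem_inter.2 ⟨hjs, mem_Icc.2 hmem⟩)
      rcases lt_or_ge (i + d) j with hij | hji
      · exact horth i j hij
      · rw [real_inner_comm]; exact horth j i (by omega)
    have hcard : (#(s ∩ Icc (i - d) (i + d)) : ℝ) ≤ 2 * d + 1 := by
      have := (card_le_card (inter_subset_right (s₁ := s))).trans
        (Nat.card_Icc (i - d) (i + d)).le
      exact_mod_cast this.trans (by omega)
    rw [← hnear]
    calc ∑ j ∈ s ∩ Icc (i - d) (i + d), ⟪v i, v j⟫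
        ≤ #(s ∩ Icc (i - d) (i + d)) • c ^ 2 := sum_le_card_nsmul _ _ _ fun j _ =>
          (real_inner_le_norm _ _).trans (by nlinarith [hv i, hv j, norm_nonneg (v i)])
      _ ≤ (2 * d + 1) * c ^ 2 := by
          rw [nsmul_eq_mul]; exact mul_le_mul_of_nonneg_right hcard (sq_nonneg c)
  calc ‖∑ i ∈ s, v i‖ ^ 2 = ∑ i ∈ s, ∑ j ∈ s, ⟪v i, v j⟫ := by
        simp_rw [← real_inner_self_eq_norm_sq, sum_inner, inner_sum]
    _ ≤ #s • ((2 * d + 1) * c ^ 2) := sum_le_card_nsmul _ _ _ fun i _ => hrow i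
    _ = (2 * d + 1) * c ^ 2 * #s := by rw [nsmul_eq_mul, mul_comm]

theorem tendsto_inv_smul_sum_of_inner_eq_zero (hv : ∀ i, ‖v i‖ ≤ c)
    (horth : ∀ i j, i + d < j → ⟪v i, v j⟫ = 0) {s : ℕ → Finset ℕ} (hs : ∀ N, #(s N) ≤ N) :
    Tendsto (fun N : ℕ => (N : ℝ)⁻¹ • ∑ i ∈ s N, v i) atTop (nhds 0) := by
  set K := (2 * d + 1) * c ^ 2
  have hK : 0 ≤ K := by positivity
  refine squeeze_zero_norm (a := fun N : ℕ => √(K / N)) (fun N => ?_) ?_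
  · rw [Real.le_sqrt (norm_nonneg _) (by positivity), norm_smul, mul_pow, norm_inv,
      Real.norm_natCast]
    rcases N.eq_zero_or_pos with rfl | hN
    · simp
    calc ((N : ℝ)⁻¹) ^ 2 * ‖∑ i ∈ s N, v i‖ ^ 2 ≤ ((N : ℝ)⁻¹) ^ 2 * (K * N) := by
          gcongr
          exact (norm_sum_sq_le_of_inner_eq_zero hv horth (s N)).trans
            (mul_le_mul_of_nonneg_left (by exact_mod_cast hs N) hK)
      _ = K / N := by field_simp
  · simpa using (tendsto_const_div_atTop_nhds_zero_nat K).sqrt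

end FiniteRangeCorrelation

instance ENNReal.holderTriple_four_four_two : ENNReal.HolderTriple 4 4 2 where
  inv_add_inv_eq_inv := by
    rw [show (4 : ENNReal) = 2 * 2 by norm_num, ENNReal.mul_inv (by simp) (by simp), ← add_mul,
      ENNReal.inv_two_add_inv_two, one_mul]

theorem ContinuousLinearMap.memLp_apply₂ {α E F G : Type*} [MeasurableSpace α] {μ : Measure α}
    [NormedAddCommGroup E] [NormedSpace ℝ E] [NormedAddCommGroup F] [NormedSpace ℝ F]
    [NormedAddCommGroup G] [NormedSpace ℝ G] (B : E →L[ℝ] F →L[ℝ] G)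
    {p q r : ENNReal} [ENNReal.HolderTriple p q r] {f : α → E} {g : α → F}
    (hf : MemLp f p μ) (hg : MemLp g q μ) : MemLp (fun x => B (f x) (g x)) r μ :=
  hf.of_bilin (B · ·) ‖B‖₊ hg (B.continuous₂.comp_aestronglyMeasurable₂ hf.1 hg.1)
    (ae_of_all _ fun x => by rw [← NNReal.coe_le_coe]; exact B.le_opNorm₂ (f x) (g x))

theorem MeasureTheory.MemLp.toLp_finsetSum {α E ι : Type*} [MeasurableSpace α]
    {μ : Measure α} [NormedAddCommGroup E] {p : ENNReal} (s : Finset ι) {f : ι → α → E}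
    (hf : ∀ i, MemLp (f i) p μ) :
    (memLp_finsetSum' s fun i _ => hf i).toLp (∑ i ∈ s, f i) = ∑ i ∈ s, (hf i).toLp (f i) := by
  classical
  induction s using Finset.induction_on with
  | empty => simp only [sum_empty]; exact MemLp.toLp_zero _
  | insert a s ha ih =>
    simp only [sum_insert ha, ← ih]
    exact MemLp.toLp_add _ _

theorem MeasureTheory.MemLp.inner_toLp_eq_integral {α E : Type*} [MeasurableSpace α]
    {μ : Measure α} [NormedAddCommGroup E] [InnerProductSpace ℝ E] {f g : α → E}
    (hf : MemLp f 2 μ) (hg : MemLp g 2 μ) : ⟪hf.toLp f, hg.toLp g⟫ = ∫ x, ⟪f x, g x⟫ ∂μ := by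
  rw [L2.inner_def]
  refine integral_congr_ae ?_
  filter_upwards [hf.coeFn_toLp, hg.coeFn_toLp] with x hfx hgx
  rw [hfx, hgx]

theorem MeasureTheory.MemLp.norm_toLp_sq_eq_integral {α E : Type*} [MeasurableSpace α]
    {μ : Measure α} [NormedAddCommGroup E] [InnerProductSpace ℝ E] {f : α → E}
    (hf : MemLp f 2 μ) : ‖hf.toLp f‖ ^ 2 = ∫ x, ‖f x‖ ^ 2 ∂μ := by
  simp only [← real_inner_self_eq_norm_sq, hf.inner_toLp_eq_integral hf]

-- The coefficient comes from
-- `a • ∑ i ∈ s, (Z i x - G) - (1 - a * #s) • G = a • ∑ i ∈ s, Z i x - G`.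
theorem integral_norm_smul_sum_sub_sq_eq {α E ι : Type*} [MeasurableSpace α] {μ : Measure α}
    [IsFiniteMeasure μ] [NormedAddCommGroup E] [InnerProductSpace ℝ E] {Z : ι → α → E}
    (hZ : ∀ i, MemLp (Z i) 2 μ) (G : E) (a : ℝ) (s : Finset ι) :
    ∫ x, ‖a • ∑ i ∈ s, Z i x - G‖ ^ 2 ∂μ
      = ‖a • ∑ i ∈ s, ((hZ i).sub (memLp_const G)).toLp (Z i - fun _ => G)
          - (1 - a * #s) • (memLp_const G).toLp (fun _ => G)‖ ^ 2 := by
  rw [← MemLp.toLp_finsetSum, ← MemLp.toLp_const_smul, ← MemLp.toLp_const_smul, ← MemLp.toLp_sub,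
    MemLp.norm_toLp_sq_eq_integral]
  refine integral_congr_ae (ae_of_all _ fun x => ?_)
  simp only [Pi.sub_apply, Pi.smul_apply, Finset.sum_apply, sum_sub_distrib,
    sum_const, ← Nat.cast_smul_eq_nsmul ℝ]
  congr 2
  module

theorem ProbabilityTheory.IdentDistrib.integral_comp_eq {α β γ E : Type*} [MeasurableSpace α]
    [MeasurableSpace β] [MeasurableSpace γ] [NormedAddCommGroup E] [NormedSpace ℝ E]
    {μ : Measure α} {ν : Measure β} {f : α → γ} {g : β → γ} (hfg : IdentDistrib f g μ ν)
    {φ : γ → E} (hφ : AEStronglyMeasurable φ (μ.map f)) :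
    ∫ x, φ (f x) ∂μ = ∫ x, φ (g x) ∂ν := by
  rw [← integral_map hfg.aemeasurable_fst hφ, hfg.map_eq,
    integral_map hfg.aemeasurable_snd (hfg.map_eq ▸ hφ)]

theorem tendsto_one_sub_inv_mul_card_Icc (h : ℕ) :
    Tendsto (fun N : ℕ => 1 - (N : ℝ)⁻¹ * #(Icc 1 (N - h))) atTop (nhds 0) := by
  refine (tendsto_const_div_atTop_nhds_zero_nat (h : ℝ)).congr' ?_
  filter_upwards [eventually_gt_atTop h] with N hN
  have hN0 : (N : ℝ) ≠ 0 := Nat.cast_ne_zero.2 (by omega)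
  rw [Nat.card_Icc, Nat.add_sub_cancel, Nat.cast_sub hN.le]
  field_simp
  ring

section LagPair

variable {Ω H : Type*} [MeasurableSpace Ω] [MeasurableSpace H] {μ : Measure Ω}

def lagPair (X : ℤ → Ω → H) (h : ℕ) (k : ℤ) (ω : Ω) : H × H := (X k ω, X (k + h) ω)

variable {X : ℤ → Ω → H} {h : ℕ}

theorem measurable_lagPair (hmeas : ∀ n, Measurable (X n)) (k : ℤ) :
    Measurable (lagPair X h k) :=
  (hmeas k).prodMk (hmeas (k + h))

theorem identDistrib_lagPair
    (hstat : ∀ τ : ℤ, IdentDistrib (fun ω (i : ℤ) => X i ω) (fun ω (i : ℤ) => X (i + τ) ω) μ μ)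
    (k : ℤ) : IdentDistrib (lagPair X h 0) (lagPair X h k) μ μ := by
  have := (hstat k).comp ((measurable_pi_apply (0 : ℤ)).prodMk (measurable_pi_apply (h : ℤ)))
  convert this using 1 <;> ext ω <;> simp [lagPair, add_comm]

theorem indepFun_lagPair {m : ℕ}
    (hmdep : ∀ n : ℤ, IndepFun (fun ω (i : {i : ℤ // i ≤ n}) => X i ω)
      (fun ω (i : {i : ℤ // n + m < i}) => X i ω) μ)
    {k l : ℤ} (hkl : k + h + m < l) : IndepFun (lagPair X h k) (lagPair X h l) μ :=
  (hmdep (k + h)).comp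
    (φ := fun x : {i : ℤ // i ≤ k + h} → H => (x ⟨k, by omega⟩, x ⟨k + h, le_rfl⟩))
    (ψ := fun x : {i : ℤ // k + h + m < i} → H => (x ⟨l, hkl⟩, x ⟨l + h, by omega⟩))
    ((measurable_pi_apply _).prodMk (measurable_pi_apply _))
    ((measurable_pi_apply _).prodMk (measurable_pi_apply _))

theorem integral_comp_lagPair [TopologicalSpace H] [SecondCountableTopology H] [BorelSpace H]
    {F : Type*} [NormedAddCommGroup F] [NormedSpace ℝ F]
    (hstat : ∀ τ : ℤ, IdentDistrib (fun ω (i : ℤ) => X i ω) (fun ω (i : ℤ) => X (i + τ) ω) μ μ)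
    {φ : H × H → F} (hφ : Continuous φ) (k : ℤ) :
    ∫ ω, φ (lagPair X h k ω) ∂μ = ∫ ω, φ (lagPair X h 0 ω) ∂μ :=
  ((identDistrib_lagPair hstat k).integral_comp_eq
    hφ.stronglyMeasurable.aestronglyMeasurable).symm

end LagPair

section LagProduct

variable {Ω H E : Type*} [MeasurableSpace Ω] {μ : Measure Ω}
  [NormedAddCommGroup H] [NormedSpace ℝ H]

noncomputable def lagProduct [NormedAddCommGroup E] [NormedSpace ℝ E]
    (T : H →L[ℝ] H →L[ℝ] E) (X : ℤ → Ω → H) (h : ℕ) (k : ℤ) (ω : Ω) : E :=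
  T (X k ω) (X (k + h) ω)

theorem memLp_two_lagProduct [NormedAddCommGroup E] [NormedSpace ℝ E]
    (T : H →L[ℝ] H →L[ℝ] E) {X : ℤ → Ω → H} {h : ℕ} (hL4 : ∀ n, MemLp (X n) 4 μ) (k : ℤ) :
    MemLp (lagProduct T X h k) 2 μ :=
  T.memLp_apply₂ (hL4 k) (hL4 (k + h))

theorem integral_inner_lagProduct_sub_eq_zero [MeasurableSpace H] [SecondCountableTopology H]
    [BorelSpace H] [NormedAddCommGroup E] [InnerProductSpace ℝ E] [CompleteSpace E]
    [IsProbabilityMeasure μ] (T : H →L[ℝ] H →L[ℝ] E) {X : ℤ → Ω → H} {h m : ℕ}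
    (hmeas : ∀ n, Measurable (X n)) (hL4 : ∀ n, MemLp (X n) 4 μ)
    (hstat : ∀ τ : ℤ, IdentDistrib (fun ω (i : ℤ) => X i ω) (fun ω (i : ℤ) => X (i + τ) ω) μ μ)
    (hmdep : ∀ n : ℤ, IndepFun (fun ω (i : {i : ℤ // i ≤ n}) => X i ω)
      (fun ω (i : {i : ℤ // n + m < i}) => X i ω) μ)
    {G : E} (hG : G = ∫ ω, lagProduct T X h 0 ω ∂μ) {k l : ℤ} (hkl : k + h + m < l) :
    ∫ ω, ⟪lagProduct T X h k ω - G, lagProduct T X h l ω - G⟫ ∂μ = 0 := by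
  set φ : H × H → E := fun p => T p.1 p.2 - G
  have hφ : Continuous φ := (T.continuous₂.comp continuous_id).sub continuous_const
  have hmean : ∀ k, ∫ ω, φ (lagPair X h k ω) ∂μ = 0 := fun k => by
    rw [integral_comp_lagPair hstat hφ k]
    change ∫ ω, (lagProduct T X h 0 ω - G) ∂μ = 0
    rw [integral_sub ((memLp_two_lagProduct T hL4 0).integrable one_le_two) (integrable_const G),
      integral_const, ← hG]
    simp
  have hint : ∀ k, Integrable φ (μ.map (lagPair X h k)) := fun k =>
    (integrable_map_measure hφ.aestronglyMeasurable (measurable_lagPair hmeas k).aemeasurable).2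
      (((memLp_two_lagProduct T hL4 k).integrable one_le_two).sub (integrable_const G))
  have := (indepFun_lagPair hmdep hkl).integral_bilin_comp_comp
    (measurable_lagPair hmeas k).aemeasurable (measurable_lagPair hmeas l).aemeasurable
    (hint k) (hint l) (innerSL ℝ : E →L[ℝ] E →L[ℝ] ℝ)
  rw [hmean, hmean, map_zero] at this
  exact this

end LagProduct

theorem statement_12_general
    {H : Type*} [NormedAddCommGroup H] [InnerProductSpace ℝ H]
    [TopologicalSpace.SeparableSpace H] [MeasurableSpace H] [BorelSpace H]
    {E : Type*} [NormedAddCommGroup E] [InnerProductSpace ℝ E] [CompleteSpace E]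
    (T : H →L[ℝ] H →L[ℝ] E)
    {Ω : Type*} [MeasurableSpace Ω] {μ : Measure Ω} [IsProbabilityMeasure μ]
    (X : ℤ → Ω → H)
    (hmeas : ∀ n, Measurable (X n))
    (hL4 : ∀ n, MemLp (X n) 4 μ)
    (hstat : ∀ τ : ℤ, IdentDistrib (fun ω (i : ℤ) => X i ω)
      (fun ω (i : ℤ) => X (i + τ) ω) μ μ)
    (m : ℕ)
    (hmdep : ∀ n : ℤ, IndepFun (fun ω (i : {i : ℤ // i ≤ n}) => X i ω)
      (fun ω (i : {i : ℤ // n + m < i}) => X i ω) μ)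
    (h : ℕ) (G : E)
    (hG : G = ∫ ω, T (X 0 ω) (X h ω) ∂μ) :
    Tendsto (fun N : ℕ =>
        ∫ ω, ‖(N : ℝ)⁻¹ • (∑ i ∈ Finset.Icc 1 (N - h), T (X i ω) (X (i + h) ω)) - G‖ ^ 2 ∂μ)
      atTop (nhds 0) := by
  have : SecondCountableTopology H := UniformSpace.secondCountable_of_separable H
  set W : ℕ → Lp E 2 μ := fun i =>
    ((memLp_two_lagProduct T (h := h) hL4 i).sub (memLp_const G)).toLp _
  set Gc : Lp E 2 μ := (memLp_const G).toLp _
  have hW_norm : ∀ i, ‖W i‖ = ‖W 0‖ := fun i => by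
    rw [← sq_eq_sq₀ (norm_nonneg _) (norm_nonneg _), MemLp.norm_toLp_sq_eq_integral,
      MemLp.norm_toLp_sq_eq_integral]
    exact integral_comp_lagPair hstat (φ := fun p => ‖T p.1 p.2 - G‖ ^ 2) (by fun_prop) i
  have hW_orth : ∀ i j, i + (h + m) < j → ⟪W i, W j⟫ = 0 := fun i j hij => by
    rw [MemLp.inner_toLp_eq_integral]
    exact integral_inner_lagProduct_sub_eq_zero T hmeas hL4 hstat hmdep
      (by simpa [lagProduct] using hG) (by omega)
  have hvariance := tendsto_inv_smul_sum_of_inner_eq_zero (fun i => (hW_norm i).le) hW_orth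
    (s := fun N => Icc 1 (N - h)) (fun N => by simp)
  have hlim := (hvariance.sub ((tendsto_one_sub_inv_mul_card_Icc h).smul_const Gc)).norm.pow 2
  rw [zero_smul, sub_zero, norm_zero, zero_pow two_ne_zero] at hlim
  refine hlim.congr fun N => ?_
  rw [← integral_norm_smul_sum_sub_sq_eq fun i : ℕ => memLp_two_lagProduct T hL4 i]
  simp only [lagProduct]

/-- For a centered stationary `m`-dependent process `(X_n)` in a separable
Hilbert space `H` (modelling `L²[0,1]`) with `E‖X_0‖⁴ < ∞`, the empirical covariance
kernel `γ̂_h = N⁻¹ ∑_{i=1}^{N−h} X_i ⊗ X_{i+h}` converges to the true covariance kernel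
`γ_h = E(X_0 ⊗ X_h)` in mean square, where the kernels live in a Hilbert space `E`
(modelling `L²([0,1]²)`) via a tensor map `T` satisfying
`⟨T a b, T c d⟩ = ⟨a,c⟩⟨b,d⟩` (the Hilbert–Schmidt kernel norm identity). -/
theorem statement_12
    {H : Type*} [NormedAddCommGroup H] [InnerProductSpace ℝ H] [CompleteSpace H]
    [TopologicalSpace.SeparableSpace H] [MeasurableSpace H] [BorelSpace H]
    {E : Type*} [NormedAddCommGroup E] [InnerProductSpace ℝ E] [CompleteSpace E]
    (T : H →L[ℝ] H →L[ℝ] E)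
    (hT : ∀ a b c d : H, ⟪T a b, T c d⟫ = ⟪a, c⟫ * ⟪b, d⟫)
    {Ω : Type*} [MeasurableSpace Ω] {μ : Measure Ω} [IsProbabilityMeasure μ]
    (X : ℤ → Ω → H)
    (hmeas : ∀ n, Measurable (X n))
    (hcentered : ∀ n, ∫ ω, X n ω ∂μ = 0)
    (hL4 : ∀ n, MemLp (X n) 4 μ)
    (hstat : ∀ τ : ℤ, IdentDistrib (fun ω (i : ℤ) => X i ω)
      (fun ω (i : ℤ) => X (i + τ) ω) μ μ)
    (m : ℕ)
    (hmdep : ∀ n : ℤ, IndepFun (fun ω (i : {i : ℤ // i ≤ n}) => X i ω)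
      (fun ω (i : {i : ℤ // n + m < i}) => X i ω) μ)
    (h : ℕ) (G : E)
    (hG : G = ∫ ω, T (X 0 ω) (X h ω) ∂μ) :
    Tendsto (fun N : ℕ =>
        ∫ ω, ‖(N : ℝ)⁻¹ • (∑ i ∈ Finset.Icc 1 (N - h), T (X i ω) (X (i + h) ω)) - G‖ ^ 2 ∂μ)
      atTop (nhds 0) :=
  statement_12_general T X hmeas hL4 hstat m hmdep h G hG
end

section
/- Let Φ_j be bounded operators on a separable Hilbert space H with ∑_{j≥0} j‖Φ_j‖ < ∞, and set Φ = ∑_{j≥0} Φ_j and Φ̃_k = −∑_{j>k} Φ_j. Then ∑_{k≥0} ‖Φ̃_k‖ < ∞, and for any sequence (ε_n) in H, if ΔX_n = ∑_{j≥0} Φ_j(ε_{n−j}) converges, then X_n = X_0 + Φ(∑_{i=1}^n ε_i) + η_n − η_0, where η_n = ∑_{k≥0} Φ̃_k(ε_{n−k}). -/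
open Filter

/-- functional Beveridge–Nelson decomposition: If `∑_j j‖Φ_j‖ < ∞`,
`Φ = ∑_j Φ_j` and `Φ̃_k = −∑_{j>k} Φ_j`, then `∑_k ‖Φ̃_k‖ < ∞`, and for any sequence
`(ε_n)` in `H`: if `ΔX_n = ∑_{j≥0} Φ_j(ε_{n−j})` converges (and the series defining
`η_n = ∑_{k≥0} Φ̃_k(ε_{n−k})` converge), then
`X_n = X_0 + Φ(∑_{i=1}^n ε_i) + η_n − η_0`. -/
theorem statement_13
    {H : Type*} [NormedAddCommGroup H] [InnerProductSpace ℝ H] [CompleteSpace H]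
    (Φ : ℕ → H →L[ℝ] H)
    (hsum : Summable fun j : ℕ => (j : ℝ) * ‖Φ j‖)
    (Φtot : H →L[ℝ] H) (hΦtot : Φtot = ∑' j : ℕ, Φ j)
    (Φt : ℕ → H →L[ℝ] H)
    (hΦt : ∀ k, Φt k = -∑' j : {j : ℕ // k < j}, Φ (j : ℕ)) :
    (Summable fun k : ℕ => ‖Φt k‖) ∧
      ∀ (ε : ℤ → H) (η : ℤ → H),
        (∀ n : ℤ, HasSum (fun k : ℕ => (Φt k) (ε (n - k))) (η n)) →
        ∀ X : ℕ → H,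
          (∀ n : ℕ, 1 ≤ n → HasSum (fun j : ℕ => (Φ j) (ε ((n : ℤ) - j))) (X n - X (n - 1))) →
          ∀ n : ℕ, X n = X 0 + Φtot (∑ i ∈ Finset.Icc 1 n, ε (i : ℤ)) + η n - η 0 := by
  -- summability of norms
  have hΦnorm : Summable fun j : ℕ => ‖Φ j‖ := by
    rw [← summable_nat_add_iff 1]
    have h1 : Summable fun j : ℕ => ((j + 1 : ℕ) : ℝ) * ‖Φ (j + 1)‖ :=
      (summable_nat_add_iff 1).2 hsum
    refine h1.of_nonneg_of_le (fun j => norm_nonneg _) fun j => ?_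
    have : (1 : ℝ) ≤ ((j + 1 : ℕ) : ℝ) := by exact_mod_cast Nat.one_le_iff_ne_zero.2 (Nat.succ_ne_zero j)
    nlinarith [norm_nonneg (Φ (j + 1))]
  have hΦ : Summable Φ := hΦnorm.of_norm
  -- key formula for Φt
  have hPhit : ∀ k, Φt k = (∑ j ∈ Finset.range (k + 1), Φ j) - Φtot := by
    intro k
    have hc := Summable.sum_add_tsum_compl (s := Finset.range (k + 1)) hΦ
    have he : (∑' j : {j : ℕ // k < j}, Φ (j : ℕ))
        = ∑' x : ↑((Finset.range (k + 1) : Finset ℕ) : Set ℕ)ᶜ, Φ (x : ℕ) := by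
      have hiff : ∀ x : ℕ, k < x ↔ x ∈ (↑(Finset.range (k + 1)) : Set ℕ)ᶜ := fun x => by
        simp only [Set.mem_compl_iff, Finset.coe_range, Set.mem_Iio, not_lt]; omega
      exact Equiv.tsum_eq (Equiv.subtypeEquivRight hiff) (fun x => Φ (x : ℕ))
    rw [hΦt k, he, hΦtot]
    rw [← hc]
    abel
  have h0 : Φ 0 = Φtot + Φt 0 := by
    rw [hPhit, Finset.range_one, Finset.sum_singleton]; abel
  have hstep : ∀ j : ℕ, Φ (j + 1) = Φt (j + 1) - Φt j := by
    intro j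
    rw [hPhit, hPhit, Finset.sum_range_succ (n := j + 1)]
    abel
  -- Part 1: summability of ‖Φt k‖
  have part1 : Summable fun k : ℕ => ‖Φt k‖ := by
    set f : ℕ × ℕ → ℝ := fun p => if p.2 < p.1 then ‖Φ p.1‖ else 0 with hf
    have hf0 : 0 ≤ f := fun p => by dsimp [f]; positivity
    have hfib : ∀ j : ℕ, Summable fun k => f (j, k) := by
      intro j
      apply summable_of_ne_finset_zero (s := Finset.range j)
      intro k hk
      simp only [f]
      rw [if_neg (by simpa using hk)]
    have hrow : ∀ j : ℕ, (∑' k, f (j, k)) = (j : ℝ) * ‖Φ j‖ := by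
      intro j
      rw [tsum_eq_sum (s := Finset.range j) (by intro k hk; simp only [f]; rw [if_neg (by simpa using hk)])]
      simp [f, Finset.sum_ite_of_true, mul_comm]
    have hF : Summable f := by
      rw [summable_prod_of_nonneg hf0]
      exact ⟨hfib, by simpa [hrow] using hsum⟩
    have hFswap : Summable fun p : ℕ × ℕ => f p.swap := hF.prod_symm
    have hmarg : Summable fun k : ℕ => ∑' j, f (j, k) := by
      have := (summable_prod_of_nonneg (f := fun p : ℕ × ℕ => f p.swap)
        (fun p => hf0 p.swap)).1 hFswap
      exact this.2
    refine hmarg.of_nonneg_of_le (fun k => norm_nonneg _) fun k => ?_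
    have hsub : Summable fun j : {j : ℕ // k < j} => ‖Φ (j : ℕ)‖ := by
      exact (hΦnorm.subtype _)
    calc ‖Φt k‖ = ‖∑' j : {j : ℕ // k < j}, Φ (j : ℕ)‖ := by rw [hΦt k, norm_neg]
      _ ≤ ∑' j : {j : ℕ // k < j}, ‖Φ (j : ℕ)‖ := norm_tsum_le_tsum_norm hsub
      _ = ∑' j, f (j, k) := by
          refine (tsum_subtype {j : ℕ | k < j} fun j => ‖Φ j‖).trans ?_
          refine tsum_congr fun j => ?_
          simp [Set.indicator_apply, hf, Set.mem_setOf_eq]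
  refine ⟨part1, ?_⟩
  intro ε η hη X hΔ
  intro n
  induction n with
  | zero => simp
  | succ n ih =>
    -- key step identity
    set w : ℕ → H := fun j => ε ((n : ℤ) + 1 - j) with hw
    have hA : HasSum (fun k : ℕ => Φt k (w k)) (η ((n : ℤ) + 1)) := by
      simpa using hη ((n : ℤ) + 1)
    have hB : HasSum (fun k : ℕ => Φt k (w (k + 1))) (η (n : ℤ)) := by
      have := hη (n : ℤ)
      refine this.congr_fun fun k => ?_
      congr 1
      simp only [hw]
      push_cast
      ring_nf
    set c : ℕ → H := fun j => Φ j (w j) - Φt j (w j) with hc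
    have hc1 : HasSum (fun j : ℕ => c (j + 1)) (-(η (n : ℤ))) := by
      refine hB.neg.congr_fun fun j => ?_
      simp only [hc, hstep j]
      simp
    have hcsum : HasSum c (-(η (n : ℤ)) + ∑ i ∈ Finset.range 1, c i) :=
      (hasSum_nat_add_iff (f := c) 1).1 hc1
    have hc0 : c 0 = Φtot (w 0) := by
      simp only [hc, h0]
      simp
    have hcsum' : HasSum c (Φtot (w 0) - η (n : ℤ)) := by
      convert hcsum using 1
      simp [hc0]
      abel
    have hkey : HasSum (fun j : ℕ => Φ j (w j))
        (η ((n : ℤ) + 1) + (Φtot (w 0) - η (n : ℤ))) := by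
      refine (hA.add hcsum').congr_fun fun j => ?_
      simp [hc]
    have hΔ' : HasSum (fun j : ℕ => Φ j (w j)) (X (n + 1) - X n) := by
      have := hΔ (n + 1) (Nat.succ_le_succ (Nat.zero_le n))
      refine this.congr_fun fun j => ?_
      congr 1
    have hXe : X (n + 1) - X n = η ((n : ℤ) + 1) + (Φtot (w 0) - η (n : ℤ)) :=
      hΔ'.unique hkey
    have hS : (∑ i ∈ Finset.Icc 1 (n + 1), ε (i : ℤ))
        = (∑ i ∈ Finset.Icc 1 n, ε (i : ℤ)) + ε ((n : ℤ) + 1) := by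
      rw [Finset.sum_Icc_succ_top (Nat.le_add_left 1 n)]
      norm_num
    have hw0 : w 0 = ε ((n : ℤ) + 1) := by simp [hw]
    have : X (n + 1) = X n + (η ((n : ℤ) + 1) + (Φtot (w 0) - η (n : ℤ))) := by
      rw [← hXe]; abel
    rw [this, ih, hS, map_add, hw0]
    push_cast
    abel
end
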